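/- arXiv:1904.12202 — 2 statements merged into one kernel-verified Lean document; each statement's English description precedes it below -/
import Mathlib

section
/- Let n ≥ 3. An element w ∈ C_n satisfies w = u (x_n x_1 x_2⋯x_{n−1}) v for some u, v ∈ C_n if and only if w is the image in C_n of a word z ∈ F such that z is a factor of (x_n x_1 x_2⋯x_{n−1})^m for some m ≥ 1 and z contains the factor x_n x_1 x_2⋯x_{n−1}. -/
namespace HK

/-- The generator `x_k` of the free monoid on `ZMod n` (indices taken mod `n`,
so `x_n` is the letter `0`). -/
def fx (n k : ℕ) : FreeMonoid (ZMod n) := FreeMonoid.of (k : ZMod n)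

/-- The ascending word `x_a x_{a+1} ⋯ x_b` (empty if `b < a`). -/
def asc (n a b : ℕ) : FreeMonoid (ZMod n) :=
  FreeMonoid.ofList ((List.range' a (b + 1 - a)).map fun k => (k : ZMod n))

/-- The descending word `x_a x_{a-1} ⋯ x_b` (empty if `a < b`). -/
def desc (n a b : ℕ) : FreeMonoid (ZMod n) :=
  FreeMonoid.ofList (((List.range' b (a + 1 - b)).map fun k => (k : ZMod n)).reverse)

/-- `x_a ⋯ x_b`: ascending if `a ≤ b`, descending otherwise. -/
def seg (n a b : ℕ) : FreeMonoid (ZMod n) := if a ≤ b then asc n a b else desc n a b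

/-- The word `q_i = x_1 ⋯ x_i x_{n-1} x_{n-2} ⋯ x_{i+1}`. -/
def qw (n i : ℕ) : FreeMonoid (ZMod n) := asc n 1 i * desc n (n - 1) (i + 1)

/-- `|u|_c`: the number of occurrences of the letter `c` in the word `u`. -/
def cnt (n : ℕ) (u : FreeMonoid (ZMod n)) (c : ZMod n) : ℕ :=
  (FreeMonoid.toList u).count c

/-- `w` is a factor of `v`. -/
def IsFactor {α : Type*} (w v : FreeMonoid α) : Prop := ∃ v₁ v₂, v = v₁ * w * v₂

/-- A word is reduced if it contains no factor of the forms (1)–(5). -/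
def Reduced (n : ℕ) (w : FreeMonoid (ZMod n)) : Prop :=
  (∀ i : ℕ, 1 ≤ i → i ≤ n → ¬ IsFactor (fx n i * fx n i) w) ∧
  (∀ i j : ℕ, 1 ≤ i → j ≤ n → 1 < j - i → j - i < n - 1 →
      ¬ IsFactor (fx n j * fx n i) w) ∧
  (∀ i j : ℕ, 1 ≤ i → i + 1 < j → j < n - 1 →
      ¬ IsFactor (fx n n * asc n 1 i * fx n j) w) ∧
  (∀ i : ℕ, ∀ u : FreeMonoid (ZMod n), 1 ≤ i → i ≤ n → u ≠ 1 →
      cnt n u (i : ZMod n) = 0 → cnt n u ((i : ZMod n) - 1) = 0 →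
      ¬ IsFactor (fx n i * u * fx n i) w) ∧
  (∀ i : ℕ, ∀ u : FreeMonoid (ZMod n), 1 ≤ i → i ≤ n → u ≠ 1 →
      cnt n u (i : ZMod n) = 0 → cnt n u ((i : ZMod n) + 1) = 0 →
      ¬ IsFactor (fx n i * u * fx n i) w)

/-- Membership in the set `A_i`. -/
def InA (n i : ℕ) (a : FreeMonoid (ZMod n)) : Prop :=
  ∃ (s : ℕ) (k : ℕ → ℕ),
    s ≤ i + 1 ∧
    (1 ≤ s → 1 ≤ k s ∧ k s ≤ s) ∧
    (∀ t, s + 1 ≤ t → t ≤ i + 1 → t < k t ∧ k t ≤ n - 1) ∧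
    (∀ t, s + 1 ≤ t → t + 1 ≤ i + 1 → k t < k (t + 1)) ∧
    ∃ p : FreeMonoid (ZMod n),
      p * a = (if s = 0 then 1 else seg n (k s) s) *
        ((List.range' (s + 1) (i + 1 - s)).map fun t => seg n (k t) t).prod

/-- Membership in the set `B_i`. -/
def InB (n i : ℕ) (b : FreeMonoid (ZMod n)) : Prop :=
  ∃ (r : ℕ) (I J : ℕ → ℕ),
    (∀ t, 1 ≤ t → t ≤ r → 1 ≤ I t ∧ I t < i + 1) ∧
    (∀ t, 1 ≤ t → t + 1 ≤ r → I (t + 1) < I t) ∧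
    i + 1 < J 1 ∧
    (∀ t, 1 ≤ t → t + 1 ≤ r + 1 → J t < J (t + 1)) ∧
    J (r + 1) ≤ n ∧
    ∃ p : FreeMonoid (ZMod n),
      b * p = ((List.range' 1 r).map fun t =>
          fx n n * asc n 1 (I t) * desc n (n - 1) (J t)).prod *
        (fx n n * desc n (n - 1) (J (r + 1)))

/-- The defining relations of the Hecke–Kiselman monoid of the oriented cycle. -/
def cnRel (n : ℕ) : FreeMonoid (ZMod n) → FreeMonoid (ZMod n) → Prop := fun w v =>
  (∃ a : ZMod n, w = FreeMonoid.of a * FreeMonoid.of a ∧ v = FreeMonoid.of a) ∨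
  (∃ a b : ZMod n, b ≠ a + 1 ∧ a ≠ b + 1 ∧
    w = FreeMonoid.of a * FreeMonoid.of b ∧ v = FreeMonoid.of b * FreeMonoid.of a) ∨
  (∃ a : ZMod n,
    (w = FreeMonoid.of a * FreeMonoid.of (a + 1) * FreeMonoid.of a ∨
     w = FreeMonoid.of (a + 1) * FreeMonoid.of a * FreeMonoid.of (a + 1)) ∧
    v = FreeMonoid.of a * FreeMonoid.of (a + 1))

/-- The Hecke–Kiselman monoid `C_n` of the oriented cycle of length `n`. -/
abbrev Cn (n : ℕ) := (conGen (cnRel n)).Quotient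

/-- The canonical projection `F → C_n`. -/
def pr (n : ℕ) : FreeMonoid (ZMod n) →* Cn n := (conGen (cnRel n)).mk'

/-- The ideal `I_i` of `C_n`. -/
def Iset (n i : ℕ) : Set (Cn n) :=
  {w | ¬ ∃ (u v : Cn n) (k : ℕ), 1 ≤ k ∧ u * w * v = (pr n (fx n n * qw n i)) ^ k}


-- infrastructure
open FreeMonoid

lemma prRel {n : ℕ} {x y : FreeMonoid (ZMod n)} (h : cnRel n x y) : pr n x = pr n y :=
  (Con.eq _).mpr (ConGen.Rel.of _ _ h)

lemma prIdem {n : ℕ} (a : ZMod n) : pr n (of a * of a) = pr n (of a) :=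
  prRel (Or.inl ⟨a, rfl, rfl⟩)

lemma prComm {n : ℕ} (a b : ZMod n) (h1 : b ≠ a + 1) (h2 : a ≠ b + 1) :
    pr n (of a * of b) = pr n (of b * of a) :=
  prRel (Or.inr (Or.inl ⟨a, b, h1, h2, rfl, rfl⟩))

lemma prBraid1 {n : ℕ} (a : ZMod n) :
    pr n (of a * of (a + 1) * of a) = pr n (of a * of (a + 1)) :=
  prRel (Or.inr (Or.inr ⟨a, Or.inl rfl, rfl⟩))

lemma prBraid2 {n : ℕ} (a : ZMod n) :
    pr n (of (a + 1) * of a * of (a + 1)) = pr n (of a * of (a + 1)) :=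
  prRel (Or.inr (Or.inr ⟨a, Or.inr rfl, rfl⟩))

/-- The ascending word of length `L` starting at position `c` (letters mod `n`). -/
def W (n c L : ℕ) : FreeMonoid (ZMod n) :=
  FreeMonoid.ofList ((List.range' c L).map (Nat.cast : ℕ → ZMod n))

lemma Wappend (n c L1 L2 : ℕ) : W n c (L1 + L2) = W n c L1 * W n (c + L1) L2 := by
  unfold W
  rw [← FreeMonoid.ofList_append, ← List.map_append]
  congr 1
  have := List.range'_append (s := c) (m := L1) (n := L2) (step := 1)
  simp only [one_mul] at this
  rw [this]

lemma Wone (n c : ℕ) : W n c 1 = of ((c : ℕ) : ZMod n) := rfl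

lemma Wcons (n c L : ℕ) : W n c (1 + L) = of ((c : ℕ) : ZMod n) * W n (c + 1) L := by
  rw [Wappend, Wone]

lemma Wsnoc (n c L : ℕ) : W n c (L + 1) = W n c L * of ((c + L : ℕ) : ZMod n) := by
  rw [Wappend, Wone]

lemma Wmod (n c L : ℕ) : W n (c + n) L = W n c L := by
  unfold W
  rw [List.range'_eq_map_range, List.range'_eq_map_range, List.map_map, List.map_map]
  congr 1
  refine List.map_congr_left fun k _ => ?_
  show ((c + n + k : ℕ) : ZMod n) = ((c + k : ℕ) : ZMod n)
  push_cast
  rw [ZMod.natCast_self]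
  ring

lemma Wshift (n c d L : ℕ) (h : n ∣ d) : W n (c + d) L = W n c L := by
  obtain ⟨e, rfl⟩ := h
  induction e with
  | zero => simp
  | succ e ih =>
    rw [show c + n * (e + 1) = c + n * e + n by ring, Wmod, ih]

lemma ascEq (n a b : ℕ) :
    asc n a b = FreeMonoid.ofList ((List.range' a (b + 1 - a)).map (Nat.cast : ℕ → ZMod n)) := by
  unfold asc
  congr 1
  simp
  exact List.map_eq_flatMap.symm

lemma ThetaEq (n : ℕ) (hn : 3 ≤ n) : fx n n * asc n 1 (n - 1) = W n 0 n := by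
  have h1 : n = 1 + (n - 1) := by omega
  rw [show W n 0 n = W n 0 (1 + (n-1)) by rw [← h1], Wcons]
  rw [ascEq]
  unfold fx W
  have h2 : n - 1 + 1 - 1 = n - 1 := by omega
  have h3 : ((n : ℕ) : ZMod n) = ((0 : ℕ) : ZMod n) := by simp [ZMod.natCast_self]
  rw [h2, h3]

lemma ThetaPow (n m : ℕ) : (W n 0 n) ^ m = W n 0 (n * m) := by
  induction m with
  | zero => simp [W]
  | succ m ih =>
    rw [pow_succ, ih, show n * (m + 1) = n * m + n by ring, Wappend]
    congr 1
    rw [show (0 : ℕ) + n * m = 0 + n * m by rfl, Wshift n 0 (n * m) n ⟨m, rfl⟩]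

/-- helper: distinct letters -/
lemma cast_ne {n : ℕ} (x y : ℕ) (h1 : x < y) (h2 : y - x < n) :
    ((x : ℕ) : ZMod n) ≠ ((y : ℕ) : ZMod n) := by
  intro h
  rw [ZMod.natCast_eq_natCast_iff'] at h
  have hx : x % n = y % n := h
  have : x ≡ y [MOD n] := hx
  have hd : n ∣ y - x := (Nat.modEq_iff_dvd' (Nat.le_of_lt h1)).mp this
  have := Nat.le_of_dvd (by omega) hd
  omega

lemma pr_comm_list {n : ℕ} (a : ZMod n) (l : List (ZMod n))
    (h : ∀ b ∈ l, pr n (of a * of b) = pr n (of b * of a)) :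
    pr n (of a * ofList l) = pr n (ofList l * of a) := by
  induction l with
  | nil => simp [FreeMonoid.ofList_nil]
  | cons b l ih =>
    rw [FreeMonoid.ofList_cons]
    have hb := h b List.mem_cons_self
    have hl := ih (fun x hx => h x (List.mem_cons_of_mem b hx))
    calc pr n (of a * (of b * ofList l))
        = pr n (of a * of b) * pr n (ofList l) := by
          simp only [map_mul, mul_assoc]
      _ = pr n (of b * of a) * pr n (ofList l) := by rw [hb]
      _ = pr n (of b) * pr n (of a * ofList l) := by
          simp only [map_mul, mul_assoc]
      _ = pr n (of b) * pr n (ofList l * of a) := by rw [hl]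
      _ = pr n (of b * ofList l * of a) := by simp only [map_mul, mul_assoc]


lemma prML {n : ℕ} {x y : FreeMonoid (ZMod n)} (h : pr n x = pr n y)
    (v : FreeMonoid (ZMod n)) : pr n (x * v) = pr n (y * v) := by
  rw [map_mul, map_mul, h]

lemma prMR {n : ℕ} {x y : FreeMonoid (ZMod n)} (h : pr n x = pr n y)
    (u : FreeMonoid (ZMod n)) : pr n (u * x) = pr n (u * y) := by
  rw [map_mul, map_mul, h]

lemma prMM {n : ℕ} {x y : FreeMonoid (ZMod n)} (h : pr n x = pr n y)
    (u v : FreeMonoid (ZMod n)) : pr n (u * x * v) = pr n (u * y * v) := by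
  rw [map_mul, map_mul, map_mul, map_mul, h]

lemma step_left {n : ℕ} (hn : 3 ≤ n) (a : ZMod n) (c L : ℕ) (hL : n ≤ L) :
    pr n (of a * W n c L) = pr n (W n (c + n - 1) (L + 1)) ∨
    pr n (of a * W n c L) = pr n (W n c L) := by
  haveI : NeZero n := ⟨by omega⟩
  set d := (a - (c : ZMod n)).val with hd
  clear_value d
  have hdn : d < n := by rw [hd]; exact ZMod.val_lt _
  have hdc : ((d : ℕ) : ZMod n) = a - (c : ZMod n) := by
    rw [hd, ZMod.natCast_val, ZMod.cast_id]
  have ha : a = ((c + d : ℕ) : ZMod n) := by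
    push_cast
    rw [hdc]
    ring
  rcases Nat.lt_or_ge d 1 with h0 | h1
  · -- d = 0 : idempotent
    right
    have hd0 : d = 0 := by omega
    obtain ⟨L', rfl⟩ : ∃ L', L = 1 + L' := ⟨L - 1, by omega⟩
    rw [Wcons]
    have ha' : a = ((c : ℕ) : ZMod n) := by rw [ha, hd0]; norm_num
    rw [← ha']
    calc pr n (of a * (of a * W n (c+1) L'))
        = pr n ((of a * of a) * W n (c+1) L') := congrArg _ (by simp only [mul_assoc])
      _ = pr n (of a * W n (c+1) L') := prML (prIdem a) _
  rcases Nat.lt_or_ge d (n - 1) with h2 | h3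
  · -- 1 ≤ d ≤ n - 2 : absorption
    right
    obtain ⟨e, rfl⟩ : ∃ e, d = e + 1 := ⟨d - 1, by omega⟩
    obtain ⟨R, rfl⟩ : ∃ R, L = e + (1 + (1 + R)) := ⟨L - e - 2, by omega⟩
    rw [Wappend, Wcons, Wcons]
    set b1 : ZMod n := ((c + e : ℕ) : ZMod n) with hb1
    have hab1 : a = b1 + 1 := by
      rw [ha, hb1, show c + (e + 1) = (c + e) + 1 by omega]
      push_cast; ring
    have ha2 : ((c + e + 1 : ℕ) : ZMod n) = a := by
      rw [ha]; exact congrArg _ (Nat.add_assoc c e 1)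
    rw [ha2]
    -- commuting a past the prefix
    have hcomm : pr n (of a * W n c e) = pr n (W n c e * of a) := by
      apply pr_comm_list
      intro b hb
      unfold W at hb
      rw [List.mem_map] at hb
      obtain ⟨k, hk, rfl⟩ := hb
      rw [List.mem_range'_1] at hk
      apply prComm
      · -- cast k ≠ a + 1
        have : a + 1 = ((c + (e+1) + 1 : ℕ) : ZMod n) := by rw [ha]; push_cast; ring
        rw [this]
        exact cast_ne (n := n) k (c + (e+1) + 1) (by omega) (by omega)
      · -- a ≠ cast k + 1
        have hk1 : ((k : ℕ) : ZMod n) + 1 = ((k + 1 : ℕ) : ZMod n) := by push_cast; ring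
        rw [hk1, ha]
        exact (cast_ne (n := n) (k+1) (c + (e+1)) (by omega) (by omega)).symm
    have hbraid : pr n (of a * of b1 * of a) = pr n (of b1 * of a) := by
      rw [hab1]; exact prBraid2 b1
    calc pr n (of a * (W n c e * (of b1 * (of a * W n (c+e+1+1) R))))
        = pr n ((of a * W n c e) * (of b1 * of a * W n (c+e+1+1) R)) :=
          congrArg _ (by simp only [mul_assoc])
      _ = pr n ((W n c e * of a) * (of b1 * of a * W n (c+e+1+1) R)) := prML hcomm _
      _ = pr n (W n c e * (of a * of b1 * of a) * W n (c+e+1+1) R) :=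
          congrArg _ (by simp only [mul_assoc])
      _ = pr n (W n c e * (of b1 * of a) * W n (c+e+1+1) R) := prMM hbraid _ _
      _ = pr n (W n c e * (of b1 * (of a * W n (c+e+1+1) R))) :=
          congrArg _ (by simp only [mul_assoc])
  · -- d = n - 1 : prepend
    left
    have hd1 : d = n - 1 := by omega
    rw [show L + 1 = 1 + L by ring, Wcons,
        show c + n - 1 + 1 = c + n by omega, Wmod]
    have : ((c + n - 1 : ℕ) : ZMod n) = a := by
      rw [ha]; congr 1; omega
    rw [this]

lemma step_right {n : ℕ} (hn : 3 ≤ n) (a : ZMod n) (c L : ℕ) (hL : n ≤ L) :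
    pr n (W n c L * of a) = pr n (W n c (L + 1)) ∨
    pr n (W n c L * of a) = pr n (W n c L) := by
  haveI : NeZero n := ⟨by omega⟩
  set e := (((c + L - 1 : ℕ) : ZMod n) - a).val with he
  clear_value e
  have hen : e < n := by rw [he]; exact ZMod.val_lt _
  have hec : ((e : ℕ) : ZMod n) = ((c + L - 1 : ℕ) : ZMod n) - a := by
    rw [he, ZMod.natCast_val, ZMod.cast_id]
  have ha : a = ((c + L - 1 - e : ℕ) : ZMod n) := by
    rw [Nat.cast_sub (by omega : e ≤ c + L - 1), hec]
    ring
  rcases Nat.lt_or_ge e 1 with h0 | h1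
  · -- e = 0 : idempotent
    right
    have he0 : e = 0 := by omega
    obtain ⟨L', rfl⟩ : ∃ L', L = L' + 1 := ⟨L - 1, by omega⟩
    rw [Wsnoc]
    have ha' : a = ((c + L' : ℕ) : ZMod n) := by
      rw [ha, he0]; exact congrArg _ (by omega : c + (L' + 1) - 1 - 0 = c + L')
    rw [← ha']
    calc pr n (W n c L' * of a * of a)
        = pr n (W n c L' * (of a * of a)) := congrArg _ (by simp only [mul_assoc])
      _ = pr n (W n c L' * of a) := prMR (prIdem a) _
  rcases Nat.lt_or_ge e (n - 1) with h2 | h3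
  · -- 1 ≤ e ≤ n - 2 : absorption
    right
    obtain ⟨g, rfl⟩ : ∃ g, e = g + 1 := ⟨e - 1, by omega⟩
    obtain ⟨m, hm⟩ : ∃ m, L = m + (1 + (1 + g)) := ⟨L - g - 2, by omega⟩
    subst hm
    rw [Wappend, Wcons, Wcons]
    have haa : a = ((c + m : ℕ) : ZMod n) := by
      rw [ha]; congr 1; omega
    have ha1 : ((c + m + 1 : ℕ) : ZMod n) = a + 1 := by
      rw [haa]; push_cast; ring
    rw [ha1]
    have hcomm : pr n (of a * W n (c + m + 1 + 1) g) = pr n (W n (c + m + 1 + 1) g * of a) := by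
      apply pr_comm_list
      intro b hb
      unfold W at hb
      rw [List.mem_map] at hb
      obtain ⟨k, hk, rfl⟩ := hb
      rw [List.mem_range'_1] at hk
      apply prComm
      · -- cast k ≠ a + 1
        rw [← ha1]
        exact (cast_ne (n := n) (c + m + 1) k (by omega) (by omega)).symm
      · -- a ≠ cast k + 1
        have hk1 : ((k : ℕ) : ZMod n) + 1 = ((k + 1 : ℕ) : ZMod n) := by push_cast; ring
        rw [hk1, haa]
        exact cast_ne (n := n) (c + m) (k + 1) (by omega) (by omega)
    rw [← haa]
    calc pr n (W n c m * (of a * (of (a+1) * W n (c+m+1+1) g)) * of a)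
        = pr n (W n c m * (of a * of (a+1)) * (W n (c+m+1+1) g * of a)) :=
          congrArg _ (by simp only [mul_assoc])
      _ = pr n (W n c m * (of a * of (a+1)) * (of a * W n (c+m+1+1) g)) :=
          prMR hcomm.symm _
      _ = pr n (W n c m * (of a * of (a+1) * of a) * W n (c+m+1+1) g) :=
          congrArg _ (by simp only [mul_assoc])
      _ = pr n (W n c m * (of a * of (a+1)) * W n (c+m+1+1) g) := prMM (prBraid1 a) _ _
      _ = pr n (W n c m * (of a * (of (a+1) * W n (c+m+1+1) g))) :=
          congrArg _ (by simp only [mul_assoc])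
  · -- e = n - 1 : append
    left
    rw [Wsnoc]
    have h4 : (c + L) % n = (c + L - 1 - e) % n :=
      (congrArg (· % n) (by omega : c + L = (c + L - 1 - e) + n)).trans
        (Nat.add_mod_right _ _)
    have : ((c + L : ℕ) : ZMod n) = a := by
      rw [ha]
      exact (ZMod.natCast_eq_natCast_iff' _ _ _).mpr h4
    rw [this]


/-- The invariant: `W n c L` contains a full cycle aligned at a multiple of `n`. -/
def Q (n c L : ℕ) : Prop := ∃ t, t + n ≤ L ∧ (c + t) % n = 0

lemma words_left {n : ℕ} (hn : 3 ≤ n) (u : FreeMonoid (ZMod n)) :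
    ∀ c L, Q n c L → ∃ c' L', Q n c' L' ∧ pr n (u * W n c L) = pr n (W n c' L') := by
  induction u using FreeMonoid.recOn with
  | one => exact fun c L hQ => ⟨c, L, hQ, by rw [one_mul]⟩
  | of_mul x u ih =>
    intro c L hQ
    obtain ⟨c1, L1, hQ1, h1⟩ := ih c L hQ
    have hL1 : n ≤ L1 := by obtain ⟨t, ht, _⟩ := hQ1; omega
    have key : pr n (of x * u * W n c L) = pr n (of x * W n c1 L1) := by
      rw [mul_assoc, map_mul, h1, ← map_mul]
    rcases step_left hn x c1 L1 hL1 with h | h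
    · refine ⟨c1 + n - 1, L1 + 1, ?_, key.trans h⟩
      obtain ⟨t, ht1, ht2⟩ := hQ1
      refine ⟨t + 1, by omega, ?_⟩
      rw [show c1 + n - 1 + (t + 1) = (c1 + t) + n by omega, Nat.add_mod_right]
      exact ht2
    · exact ⟨c1, L1, hQ1, key.trans h⟩

lemma words_right {n : ℕ} (hn : 3 ≤ n) (v : FreeMonoid (ZMod n)) :
    ∀ c L, Q n c L → ∃ c' L', Q n c' L' ∧ pr n (W n c L * v) = pr n (W n c' L') := by
  induction v using FreeMonoid.recOn with
  | one => exact fun c L hQ => ⟨c, L, hQ, by rw [mul_one]⟩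
  | of_mul x v ih =>
    intro c L hQ
    have hL : n ≤ L := by obtain ⟨t, ht, _⟩ := hQ; omega
    rcases step_right hn x c L hL with h | h
    · obtain ⟨c1, L1, hQ1, h1⟩ := ih c (L + 1)
        (by obtain ⟨t, ht1, ht2⟩ := hQ; exact ⟨t, by omega, ht2⟩)
      refine ⟨c1, L1, hQ1, ?_⟩
      calc pr n (W n c L * (of x * v))
          = pr n ((W n c L * of x) * v) := congrArg _ (by simp only [mul_assoc])
        _ = pr n (W n c (L + 1) * v) := prML h _
        _ = pr n (W n c1 L1) := h1
    · obtain ⟨c1, L1, hQ1, h1⟩ := ih c L hQ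
      refine ⟨c1, L1, hQ1, ?_⟩
      calc pr n (W n c L * (of x * v))
          = pr n ((W n c L * of x) * v) := congrArg _ (by simp only [mul_assoc])
        _ = pr n (W n c L * v) := prML h _
        _ = pr n (W n c1 L1) := h1

lemma Wnorm (n c L : ℕ) (hn : 0 < n) : W n c L = W n (c % n) L := by
  have h := Wshift n (c % n) (n * (c / n)) L ⟨c / n, rfl⟩
  rw [Nat.mod_add_div] at h
  exact h


/-- Corollary 3.19 (M_{n-2}): `M̃_{n-2} = C_n (x_n x_1 ⋯ x_{n-1}) C_n`. -/
theorem stmt13 (n : ℕ) (hn : 3 ≤ n) (w : Cn n) :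
    (∃ u v : Cn n, w = u * pr n (fx n n * asc n 1 (n - 1)) * v) ↔
    ∃ z : FreeMonoid (ZMod n),
      (∃ m : ℕ, 1 ≤ m ∧ IsFactor z ((fx n n * asc n 1 (n - 1)) ^ m)) ∧
      IsFactor (fx n n * asc n 1 (n - 1)) z ∧ w = pr n z := by
  have hTheta : fx n n * asc n 1 (n - 1) = W n 0 n := ThetaEq n hn
  constructor
  · rintro ⟨u, v, rfl⟩
    obtain ⟨ub, hub⟩ := Con.mk'_surjective u
    obtain ⟨vb, hvb⟩ := Con.mk'_surjective v
    have hub' : pr n ub = u := hub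
    have hvb' : pr n vb = v := hvb
    have hQ0 : Q n 0 n := ⟨0, by omega, by simp⟩
    obtain ⟨c1, L1, hQ1, h1⟩ := words_right hn vb 0 n hQ0
    obtain ⟨c2, L2, hQ2, h2⟩ := words_left hn ub c1 L1 hQ1
    obtain ⟨t, ht1, ht2⟩ := hQ2
    have hL2 : n ≤ L2 := by omega
    refine ⟨W n c2 L2, ?_, ?_, ?_⟩
    · -- factor of a power
      set m : ℕ := c2 % n + L2 with hm
      have hm1 : 1 ≤ m := by omega
      have hnm : c2 % n + L2 ≤ n * m := by
        have : m ≤ n * m := Nat.le_mul_of_pos_left m (by omega)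
        omega
      refine ⟨m, hm1, W n 0 (c2 % n), W n (c2 % n + L2) (n * m - c2 % n - L2), ?_⟩
      conv_lhs => rw [hTheta, ThetaPow,
        show n * m = c2 % n + (L2 + (n * m - c2 % n - L2)) by omega,
        Wappend, Wappend]
      rw [zero_add, ← Wnorm n c2 L2 (by omega), ← mul_assoc]
    · -- contains the cycle
      refine ⟨W n c2 t, W n (c2 + t + n) (L2 - t - n), ?_⟩
      have hcyc : W n (c2 + t) n = W n 0 n := by
        have h := Wshift n 0 (c2 + t) n (Nat.dvd_of_mod_eq_zero ht2)
        rw [zero_add] at h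
        exact h
      conv_lhs => rw [show L2 = t + (n + (L2 - t - n)) by omega, Wappend, Wappend]
      rw [hcyc, hTheta, ← mul_assoc]
    · -- the element
      calc u * pr n (fx n n * asc n 1 (n - 1)) * v
          = pr n ub * pr n (W n 0 n) * pr n vb := by rw [hTheta, hub', hvb']
        _ = pr n ub * pr n (W n 0 n * vb) := by rw [mul_assoc, ← map_mul]
        _ = pr n ub * pr n (W n c1 L1) := by rw [h1]
        _ = pr n (ub * W n c1 L1) := by rw [← map_mul]
        _ = pr n (W n c2 L2) := h2
  · rintro ⟨z, -, ⟨z1, z2, rfl⟩, rfl⟩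
    exact ⟨pr n z1, pr n z2, by rw [map_mul, map_mul]⟩


end HK
end

section
/- Let n ≥ 3 and let HK_Θ be the Hecke–Kiselman monoid of the graph Θ obtained by adjoining an arrow y → x_1 to the oriented cycle x_1→x_2→⋯→x_n→x_1. Then HK_Θ satisfies neither the ascending chain condition on right ideals nor the ascending chain condition on left ideals. In fact, the elements w_k = (x_n x_{n−1}⋯x_1)^k y (k ≥ 1) satisfy w_k ∉ w_i·HK_Θ for all 1 ≤ i < k, and the elements v_k = x_1 x_2 y (x_1 x_n x_{n−1}⋯x_2)^k (k ≥ 1) satisfy v_k ∉ HK_Θ·v_i for all 1 ≤ i < k. -/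
namespace HK

/-- The defining relations of the Hecke–Kiselman monoid of the graph `Θ` obtained
from the oriented cycle `x_1 → x_2 → ⋯ → x_n → x_1` by adjoining an arrow `y → x_1`.
Letters: `Sum.inl a` is `x_a` (indices in `ZMod n`, the letter `0` being `x_n`),
and `Sum.inr ()` is `y`. -/
def hkRel (n : ℕ) : FreeMonoid (ZMod n ⊕ Unit) → FreeMonoid (ZMod n ⊕ Unit) → Prop :=
  fun w v =>
    (∃ g : ZMod n ⊕ Unit, w = FreeMonoid.of g * FreeMonoid.of g ∧ v = FreeMonoid.of g) ∨
    (∃ a b : ZMod n, b ≠ a + 1 ∧ a ≠ b + 1 ∧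
      w = FreeMonoid.of (Sum.inl a) * FreeMonoid.of (Sum.inl b) ∧
      v = FreeMonoid.of (Sum.inl b) * FreeMonoid.of (Sum.inl a)) ∨
    (∃ a : ZMod n, a ≠ 1 ∧
      w = FreeMonoid.of (Sum.inr ()) * FreeMonoid.of (Sum.inl a) ∧
      v = FreeMonoid.of (Sum.inl a) * FreeMonoid.of (Sum.inr ())) ∨
    (∃ a : ZMod n,
      (w = FreeMonoid.of (Sum.inl a) * FreeMonoid.of (Sum.inl (a + 1)) *
             FreeMonoid.of (Sum.inl a) ∨
       w = FreeMonoid.of (Sum.inl (a + 1)) * FreeMonoid.of (Sum.inl a) *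
             FreeMonoid.of (Sum.inl (a + 1))) ∧
      v = FreeMonoid.of (Sum.inl a) * FreeMonoid.of (Sum.inl (a + 1))) ∨
    ((w = FreeMonoid.of (Sum.inr ()) * FreeMonoid.of (Sum.inl 1) *
            FreeMonoid.of (Sum.inr ()) ∨
      w = FreeMonoid.of (Sum.inl 1) * FreeMonoid.of (Sum.inr ()) *
            FreeMonoid.of (Sum.inl 1)) ∧
     v = FreeMonoid.of (Sum.inr ()) * FreeMonoid.of (Sum.inl 1))

/-- The Hecke–Kiselman monoid `HK_Θ` of the cycle with an adjoined arrow `y → x_1`. -/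
abbrev HKT (n : ℕ) := (conGen (hkRel n)).Quotient

/-- The projection onto `HK_Θ`. -/
def prh (n : ℕ) : FreeMonoid (ZMod n ⊕ Unit) →* HKT n := (conGen (hkRel n)).mk'

/-- The image of the word `x_n x_{n-1} ⋯ x_1` in `HK_Θ`. -/
def dxn1 (n : ℕ) : HKT n :=
  prh n (FreeMonoid.ofList
    (((List.range' 1 n).map fun t => (Sum.inl (t : ZMod n) : ZMod n ⊕ Unit)).reverse))

/-- The element `y`. -/
def yel (n : ℕ) : HKT n := prh n (FreeMonoid.of (Sum.inr ()))

/-- `w_k = (x_n x_{n-1} ⋯ x_1)^k y`. -/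
def wk (n k : ℕ) : HKT n := (dxn1 n) ^ k * yel n

/-- The image of the word `x_1 x_n x_{n-1} ⋯ x_2` in `HK_Θ`. -/
def inner (n : ℕ) : HKT n :=
  prh n (FreeMonoid.ofList
    ((Sum.inl (1 : ZMod n) : ZMod n ⊕ Unit) ::
      ((List.range' 2 (n - 1)).map fun t => (Sum.inl (t : ZMod n) : ZMod n ⊕ Unit)).reverse))

/-- `v_k = x_1 x_2 y (x_1 x_n x_{n-1} ⋯ x_2)^k`. -/
def vk (n k : ℕ) : HKT n :=
  prh n (FreeMonoid.of (Sum.inl (1 : ZMod n)) * FreeMonoid.of (Sum.inl (2 : ZMod n)) *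
    FreeMonoid.of (Sum.inr ())) * (inner n) ^ k


open scoped Classical

section Aux

variable {n : ℕ}

/-- block function: `qf n m = ⌊(m-1)/n⌋`. -/
def qf (n : ℕ) (m : ℤ) : ℤ := (m - 1) / (n : ℤ)

/-- generator actions on `ℤ × Option ℤ`. -/
def act (n : ℕ) : ZMod n ⊕ Unit → ℤ × Option ℤ → ℤ × Option ℤ
  | Sum.inl a, p => (if ((p.1 : ZMod n) = a) then p.1 - 1 else p.1, p.2)
  | Sum.inr _, p => (p.1, some (qf n p.1))

@[simp] lemma act_inl (a : ZMod n) (p : ℤ × Option ℤ) :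
    act n (Sum.inl a) p = (if ((p.1 : ZMod n) = a) then p.1 - 1 else p.1, p.2) := rfl

@[simp] lemma act_inr (u : Unit) (p : ℤ × Option ℤ) :
    act n (Sum.inr u) p = (p.1, some (qf n p.1)) := rfl

lemma res_one_iff (m : ℤ) : ((m : ZMod n) = 1) ↔ (n : ℤ) ∣ (m - 1) := by
  constructor
  · intro h
    rw [← ZMod.intCast_zmod_eq_zero_iff_dvd]
    push_cast
    rw [h]; ring
  · intro h
    have h0 : ((m - 1 : ℤ) : ZMod n) = 0 := (ZMod.intCast_zmod_eq_zero_iff_dvd _ _).2 h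
    push_cast at h0
    linear_combination h0

lemma ediv_helper (hn : 3 ≤ n) {a e r : ℤ} (h : a = n * e + r) (h0 : 0 ≤ r) (h1 : r < n) :
    a / (n : ℤ) = e := by
  have hne : (n : ℤ) ≠ 0 := by positivity
  subst h
  rw [add_comm, Int.add_mul_ediv_left r e hne, Int.ediv_eq_zero_of_lt h0 h1, zero_add]

lemma qf_pred_eq (hn : 3 ≤ n) {m : ℤ} (h : (m : ZMod n) ≠ 1) : qf n (m - 1) = qf n m := by
  have hn0 : (0:ℤ) < n := by positivity
  set e := (m - 1) / (n : ℤ) with he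
  have hde : (n:ℤ) * e + (m-1) % n = m - 1 := Int.mul_ediv_add_emod _ _
  have hr0 : 0 ≤ (m-1) % (n:ℤ) := Int.emod_nonneg _ (by positivity)
  have hr1 : (m-1) % (n:ℤ) < n := Int.emod_lt_of_pos _ hn0
  have hrne : (m-1) % (n:ℤ) ≠ 0 := by
    intro h0
    exact h ((res_one_iff m).2 ⟨e, by omega⟩)
  have h2 : (m - 1 - 1) = (n:ℤ) * e + ((m-1) % n - 1) := by omega
  unfold qf
  rw [ediv_helper hn h2 (by omega) (by omega)]

lemma qf_pred_lt (hn : 3 ≤ n) {m : ℤ} (h : (m : ZMod n) = 1) : qf n (m - 1) = qf n m - 1 := by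
  obtain ⟨e, he⟩ := (res_one_iff m).1 h
  have h1 : qf n m = e := ediv_helper hn (by omega) le_rfl (by omega)
  have h2 : qf n (m - 1) = e - 1 := by
    unfold qf
    exact ediv_helper hn (a := m - 1 - 1) (r := (n:ℤ) - 1)
      (by rw [show m - 1 - 1 = (n:ℤ)*e - 1 by omega]; ring) (by omega) (by omega)
  omega

lemma qf_mono (hn : 3 ≤ n) {m m' : ℤ} (h : m ≤ m') : qf n m ≤ qf n m' :=
  Int.ediv_le_ediv (by positivity) (by omega)

lemma qf_one (hn : 3 ≤ n) : qf n 1 = 0 := by unfold qf; norm_num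

lemma qf_two (hn : 3 ≤ n) : qf n 2 = 0 := by
  unfold qf
  norm_num
  exact Int.ediv_eq_zero_of_lt (by norm_num) (by exact_mod_cast (by omega : (1:ℕ) < n))

lemma qf_zero (hn : 3 ≤ n) : qf n 0 = -1 := by
  unfold qf
  exact ediv_helper hn (a := (0:ℤ) - 1) (e := -1) (r := (n:ℤ) - 1) (by omega) (by omega) (by omega)

lemma one_ne_zero' (hn : 3 ≤ n) : (1 : ZMod n) ≠ 0 := by
  intro h0
  have h1 : ((1:ℤ) : ZMod n) = 0 := by push_cast; exact h0
  rw [ZMod.intCast_zmod_eq_zero_iff_dvd] at h1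
  have := Int.le_of_dvd (by norm_num) h1
  omega

lemma two_ne_zero' (hn : 3 ≤ n) : (2 : ZMod n) ≠ 0 := by
  intro h0
  have h1 : ((2:ℤ) : ZMod n) = 0 := by push_cast; exact h0
  rw [ZMod.intCast_zmod_eq_zero_iff_dvd] at h1
  have := Int.le_of_dvd (by norm_num) h1
  omega

lemma natCast_inj_lt (hn : 3 ≤ n) {a b : ℕ} (h1 : a < n) (h2 : b < n)
    (h : (a : ZMod n) = (b : ZMod n)) : a = b := by
  haveI : NeZero n := ⟨by omega⟩
  have hva := ZMod.val_cast_of_lt h1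
  have hvb := ZMod.val_cast_of_lt h2
  rw [h] at hva
  omega

lemma exists_res (hn : 3 ≤ n) (m : ℤ) : ∃ ρ : ℕ, ρ < n ∧ (m : ZMod n) = (ρ : ZMod n) := by
  haveI : NeZero n := ⟨by omega⟩
  exact ⟨(m : ZMod n).val, ZMod.val_lt _, (ZMod.natCast_rightInverse _).symm⟩

/- ------------- fold lemmas ------------- -/

lemma act_fst_le (g : ZMod n ⊕ Unit) (p : ℤ × Option ℤ) : (act n g p).1 ≤ p.1 := by
  cases g with
  | inl a =>
    by_cases h : ((p.1 : ZMod n) = a) <;> simp [h]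
  | inr u => simp

lemma act_fst_congr (g : ZMod n ⊕ Unit) {p p' : ℤ × Option ℤ} (h : p.1 = p'.1) :
    (act n g p).1 = (act n g p').1 := by
  cases g with
  | inl a => simp [h]
  | inr u => simp [h]

lemma ev_fst_le (l : List (ZMod n ⊕ Unit)) (p : ℤ × Option ℤ) :
    (l.foldr (act n) p).1 ≤ p.1 := by
  induction l with
  | nil => exact le_rfl
  | cons g l ih =>
    calc (act n g (l.foldr (act n) p)).1 ≤ (l.foldr (act n) p).1 := act_fst_le _ _
    _ ≤ p.1 := ih

lemma ev_fst_congr (l : List (ZMod n ⊕ Unit)) {p p' : ℤ × Option ℤ} (h : p.1 = p'.1) :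
    (l.foldr (act n) p).1 = (l.foldr (act n) p').1 := by
  induction l with
  | nil => exact h
  | cons g l ih => exact act_fst_congr g ih

lemma ev_snd_noY (l : List (ZMod n ⊕ Unit)) (h : (Sum.inr () : ZMod n ⊕ Unit) ∉ l)
    (p : ℤ × Option ℤ) : (l.foldr (act n) p).2 = p.2 := by
  induction l with
  | nil => rfl
  | cons g l ih =>
    have hg : g ∈ (g :: l) := List.mem_cons_self
    cases g with
    | inl a =>
      have := ih (by intro hm; exact h (List.mem_cons_of_mem _ hm))
      simpa using this
    | inr u => exact absurd (by cases u; exact List.mem_cons_self) h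

/- ------------- chain evaluation ------------- -/

def chainL (n s len : ℕ) : List (ZMod n ⊕ Unit) :=
  (List.range' s len).map fun t => (Sum.inl (t : ZMod n) : ZMod n ⊕ Unit)

lemma chain_eval (hn : 3 ≤ n) (s : ℕ) (hs : 1 ≤ s) :
    ∀ len, s + len ≤ n → ∀ (m : ℤ) (o : Option ℤ),
    (chainL n s len).foldl (fun p g => act n g p) (m, o)
      = (if ∃ r : ℕ, s ≤ r ∧ r < s + len ∧ (m : ZMod n) = (r : ZMod n) then m - 1 else m, o) := by
  intro len
  induction len with
  | zero =>
    intro _ m o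
    rw [if_neg (by rintro ⟨r, h1, h2, -⟩; omega)]
    simp [chainL]
  | succ len ih =>
    intro hb m o
    have hsp : List.range' s (len+1) = List.range' s len ++ [s + len] := by
      simpa using List.range'_concat (step := 1) (s := s) (n := len)
    have hchain : chainL n s (len+1)
        = chainL n s len ++ [(Sum.inl ((s+len : ℕ) : ZMod n) : ZMod n ⊕ Unit)] := by
      simp [chainL, hsp]
    rw [hchain, List.foldl_append, ih (by omega)]
    by_cases hex : ∃ r : ℕ, s ≤ r ∧ r < s + len ∧ (m : ZMod n) = (r : ZMod n)
    · obtain ⟨r, hr1, hr2, hr3⟩ := hex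
      rw [if_pos ⟨r, hr1, hr2, hr3⟩]
      have hm1 : ((m - 1 : ℤ) : ZMod n) = ((r - 1 : ℕ) : ZMod n) := by
        have h' : ((r - 1 : ℕ) : ZMod n) = (r : ZMod n) - 1 := by
          have : (1:ℕ) ≤ r := hr1.trans' hs
          push_cast [this]
          ring
        rw [h']
        push_cast
        rw [hr3]
      have hne : ((m - 1 : ℤ) : ZMod n) ≠ ((s + len : ℕ) : ZMod n) := by
        rw [hm1]
        intro hcc
        have := natCast_inj_lt hn (by omega) (by omega) hcc
        omega
      simp only [List.foldl_cons, List.foldl_nil, act_inl]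
      rw [if_neg hne, if_pos ⟨r, hr1, by omega, hr3⟩]
    · rw [if_neg hex]
      by_cases hc : (m : ZMod n) = ((s + len : ℕ) : ZMod n)
      · simp only [List.foldl_cons, List.foldl_nil, act_inl]
        rw [if_pos hc, if_pos ⟨s + len, by omega, by omega, hc⟩]
      · simp only [List.foldl_cons, List.foldl_nil, act_inl]
        rw [if_neg hc, if_neg (by
          rintro ⟨r, h1, h2, h3⟩
          rcases Nat.lt_succ_iff_lt_or_eq.mp (by omega : r < (s + len) + 1) with h | h
          · exact hex ⟨r, h1, h, h3⟩
          · exact hc (h ▸ h3))]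

/- ------------- the three basic integer maps ------------- -/

def Cf (n : ℕ) (m : ℤ) : ℤ := if (m : ZMod n) = 1 then m - 2 else m - 1

def Df (n : ℕ) (m : ℤ) : ℤ := if (m : ZMod n) = 2 then m - 2 else m - 1

def Xf (n : ℕ) (m : ℤ) : ℤ :=
  if (m : ZMod n) = 2 then m - 2 else if (m : ZMod n) = 1 then m - 1 else m

lemma Cf_le (m : ℤ) : Cf n m ≤ m - 1 := by
  unfold Cf; split <;> omega

lemma Cf_iter_le (j : ℕ) (m : ℤ) : (Cf n)^[j] m ≤ m - j := by
  induction j generalizing m with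
  | zero => simp
  | succ j ih =>
    rw [Function.iterate_succ_apply]
    calc (Cf n)^[j] (Cf n m) ≤ Cf n m - j := ih _
    _ ≤ m - (j+1 : ℕ) := by have := Cf_le (n := n) m; push_cast; omega

lemma Df_le (m : ℤ) : Df n m ≤ m - 1 := by
  unfold Df; split <;> omega

lemma Df_iter_le (j : ℕ) (m : ℤ) : (Df n)^[j] m ≤ m - j := by
  induction j generalizing m with
  | zero => simp
  | succ j ih =>
    rw [Function.iterate_succ_apply]
    calc (Df n)^[j] (Df n m) ≤ Df n m - j := ih _
    _ ≤ m - (j+1 : ℕ) := by have := Df_le (n := n) m; push_cast; omega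

lemma Xf_le (m : ℤ) : Xf n m ≤ m := by
  unfold Xf; split
  · omega
  · split <;> omega

end Aux

section Aux2
variable {n : ℕ}

lemma cword_eval (hn : 3 ≤ n) (m : ℤ) (o : Option ℤ) :
    ((chainL n 1 n).reverse).foldr (act n) (m, o) = (Cf n m, o) := by
  rw [List.foldr_reverse]
  have hsplit : chainL n 1 n = chainL n 1 (n-1) ++ [(Sum.inl ((1 + (n-1) : ℕ) : ZMod n) : ZMod n ⊕ Unit)] := by
    have h1 : List.range' 1 n = List.range' 1 (n-1) ++ [1 + (n-1)] := by
      have := List.range'_concat (step := 1) (s := 1) (n := n-1)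
      simpa [show n - 1 + 1 = n by omega] using this
    simp [chainL, h1]
  rw [hsplit, List.foldl_append, chain_eval hn 1 le_rfl (n-1) (by omega)]
  have hcast0 : ((1 + (n-1) : ℕ) : ZMod n) = 0 := by
    rw [show 1 + (n-1) = n by omega]
    exact ZMod.natCast_self n
  simp only [List.foldl_cons, List.foldl_nil, act_inl, hcast0]
  by_cases hex : ∃ r : ℕ, 1 ≤ r ∧ r < 1 + (n-1) ∧ (m : ZMod n) = (r : ZMod n)
  · rw [if_pos hex]
    obtain ⟨r, hr1, hr2, hr3⟩ := hex
    have hm1 : ((m - 1 : ℤ) : ZMod n) = ((r - 1 : ℕ) : ZMod n) := by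
      have h' : ((r - 1 : ℕ) : ZMod n) = (r : ZMod n) - 1 := by
        push_cast [hr1]; ring
      rw [h']; push_cast; rw [hr3]
    by_cases hr : r = 1
    · subst hr
      have hfire : ((m - 1 : ℤ) : ZMod n) = 0 := by
        rw [hm1]; norm_num
      rw [if_pos hfire]
      have hm1' : (m : ZMod n) = 1 := by rw [hr3]; norm_num
      unfold Cf
      rw [if_pos hm1']
      norm_num
      ring
    · have hnofire : ((m - 1 : ℤ) : ZMod n) ≠ 0 := by
        rw [hm1]
        intro hcc
        have : ((r - 1 : ℕ) : ZMod n) = ((0:ℕ) : ZMod n) := by push_cast; exact hcc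
        have := natCast_inj_lt hn (by omega) (by omega) this
        omega
      rw [if_neg hnofire]
      have hm1' : (m : ZMod n) ≠ 1 := by
        rw [hr3]
        intro hcc
        have : ((r:ℕ) : ZMod n) = ((1:ℕ) : ZMod n) := by push_cast; exact hcc
        have := natCast_inj_lt hn (by omega) (by omega) this
        omega
      unfold Cf
      rw [if_neg hm1']
  · rw [if_neg hex]
    obtain ⟨ρ, hρn, hρ⟩ := exists_res hn m
    have hρ0 : ρ = 0 := by
      by_contra hne
      exact hex ⟨ρ, by omega, by omega, hρ⟩
    subst hρ0
    have hfire : (m : ZMod n) = 0 := by simpa using hρ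
    rw [if_pos hfire]
    have hm1' : (m : ZMod n) ≠ 1 := by
      rw [hfire]
      exact fun hcc => one_ne_zero' hn hcc.symm
    unfold Cf
    rw [if_neg hm1']

lemma inner_eval (hn : 3 ≤ n) (m : ℤ) (o : Option ℤ) :
    (((Sum.inl (1 : ZMod n) : ZMod n ⊕ Unit) :: (chainL n 2 (n-1)).reverse)).foldr
      (act n) (m, o) = (Df n m, o) := by
  rw [List.foldr_cons, List.foldr_reverse]
  have hsplit : chainL n 2 (n-1) = chainL n 2 (n-2) ++ [(Sum.inl ((2 + (n-2) : ℕ) : ZMod n) : ZMod n ⊕ Unit)] := by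
    have h1 : List.range' 2 (n-1) = List.range' 2 (n-2) ++ [2 + (n-2)] := by
      have := List.range'_concat (step := 1) (s := 2) (n := n-2)
      simpa [show n - 2 + 1 = n - 1 by omega] using this
    simp [chainL, h1]
  rw [hsplit, List.foldl_append, chain_eval hn 2 (by omega) (n-2) (by omega)]
  have hcast0 : ((2 + (n-2) : ℕ) : ZMod n) = 0 := by
    rw [show 2 + (n-2) = n by omega]
    exact ZMod.natCast_self n
  simp only [List.foldl_cons, List.foldl_nil, act_inl, hcast0]
  by_cases hex : ∃ r : ℕ, 2 ≤ r ∧ r < 2 + (n-2) ∧ (m : ZMod n) = (r : ZMod n)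
  · rw [if_pos hex]
    obtain ⟨r, hr1, hr2, hr3⟩ := hex
    have hm1 : ((m - 1 : ℤ) : ZMod n) = ((r - 1 : ℕ) : ZMod n) := by
      have h' : ((r - 1 : ℕ) : ZMod n) = (r : ZMod n) - 1 := by
        push_cast [show 1 ≤ r by omega]; ring
      rw [h']; push_cast; rw [hr3]
    have hnofire0 : ((m - 1 : ℤ) : ZMod n) ≠ 0 := by
      rw [hm1]
      intro hcc
      have : ((r - 1 : ℕ) : ZMod n) = ((0:ℕ) : ZMod n) := by push_cast; exact hcc
      have := natCast_inj_lt hn (by omega) (by omega) this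
      omega
    rw [if_neg hnofire0]
    by_cases hr : r = 2
    · subst hr
      have hfire : ((m - 1 : ℤ) : ZMod n) = 1 := by
        rw [hm1]; norm_num
      rw [if_pos hfire]
      have hm2 : (m : ZMod n) = 2 := by rw [hr3]; norm_num
      unfold Df
      rw [if_pos hm2]
      ring_nf
    · have hnofire1 : ((m - 1 : ℤ) : ZMod n) ≠ 1 := by
        rw [hm1]
        intro hcc
        have : ((r - 1 : ℕ) : ZMod n) = ((1:ℕ) : ZMod n) := by push_cast; exact hcc
        have := natCast_inj_lt hn (by omega) (by omega) this
        omega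
      rw [if_neg hnofire1]
      have hm2 : (m : ZMod n) ≠ 2 := by
        rw [hr3]
        intro hcc
        have : ((r:ℕ) : ZMod n) = ((2:ℕ) : ZMod n) := by push_cast; push_cast at hcc; exact hcc
        have := natCast_inj_lt hn (by omega) (by omega) this
        omega
      unfold Df
      rw [if_neg hm2]
  · rw [if_neg hex]
    obtain ⟨ρ, hρn, hρ⟩ := exists_res hn m
    have hρ01 : ρ = 0 ∨ ρ = 1 := by
      by_contra hne
      push_neg at hne
      exact hex ⟨ρ, by omega, by omega, hρ⟩
    rcases hρ01 with h0 | h1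
    · subst h0
      have hfire : (m : ZMod n) = 0 := by simpa using hρ
      rw [if_pos hfire]
      have hnofire1 : ((m - 1 : ℤ) : ZMod n) ≠ 1 := by
        push_cast
        rw [hfire]
        intro hcc
        apply two_ne_zero' hn
        linear_combination -hcc
      rw [if_neg hnofire1]
      have hm2 : (m : ZMod n) ≠ 2 := by
        rw [hfire]
        exact fun hcc => two_ne_zero' hn hcc.symm
      unfold Df
      rw [if_neg hm2]
    · subst h1
      have hm1 : (m : ZMod n) = 1 := by simpa using hρ
      have hnofire0 : (m : ZMod n) ≠ 0 := by
        rw [hm1]; exact one_ne_zero' hn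
      rw [if_neg hnofire0]
      rw [if_pos hm1]
      have hm2 : (m : ZMod n) ≠ 2 := by
        rw [hm1]
        intro hcc
        exact one_ne_zero' hn (by linear_combination -hcc)
      unfold Df
      rw [if_neg hm2]

end Aux2

section Aux3
variable {n : ℕ}

lemma act_fire {m : ℤ} {o : Option ℤ} {a : ZMod n} (h : (m : ZMod n) = a) :
    act n (Sum.inl a) (m, o) = (m - 1, o) := by simp [h]

lemma act_skip {m : ℤ} {o : Option ℤ} {a : ZMod n} (h : (m : ZMod n) ≠ a) :
    act n (Sum.inl a) (m, o) = (m, o) := by simp [h]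

lemma act_y (m : ℤ) (o : Option ℤ) : act n (Sum.inr ()) (m, o) = (m, some (qf n m)) := rfl

lemma res_sub_one {m : ℤ} {c : ZMod n} (h : (m : ZMod n) = c) :
    ((m - 1 : ℤ) : ZMod n) = c - 1 := by push_cast; rw [h]

/-- the lifted monoid homomorphism on the free monoid. -/
def Fm (n : ℕ) : FreeMonoid (ZMod n ⊕ Unit) →* Function.End (ℤ × Option ℤ) :=
  FreeMonoid.lift (act n)

lemma endMul_apply (f g : Function.End (ℤ × Option ℤ)) (p : ℤ × Option ℤ) :
    (f * g) p = f (g p) := rfl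

lemma Fm_of (g : ZMod n ⊕ Unit) (p : ℤ × Option ℤ) : Fm n (FreeMonoid.of g) p = act n g p := by
  have h2 : Fm n (FreeMonoid.of g) = act n g := FreeMonoid.lift_eval_of _ _
  rw [h2]

lemma Fm_rel (hn : 3 ≤ n) (w v : FreeMonoid (ZMod n ⊕ Unit)) (h : hkRel n w v) :
    Fm n w = Fm n v := by
  have h10 : (1 : ZMod n) ≠ 0 := one_ne_zero' hn
  have h20 : (2 : ZMod n) ≠ 0 := two_ne_zero' hn
  have h01 : (0 : ZMod n) ≠ 1 := fun hcc => h10 hcc.symm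
  obtain ⟨g, rfl, rfl⟩ | ⟨a, b, hba, hab, rfl, rfl⟩ | ⟨a, ha, rfl, rfl⟩ | ⟨a, hw, rfl⟩ | ⟨hw, rfl⟩ := h
  · -- idempotency
    funext p
    obtain ⟨m, o⟩ := p
    simp only [map_mul, endMul_apply, Fm_of]
    cases g with
    | inl a =>
      by_cases hm : (m : ZMod n) = a
      · have hf : ((m - 1 : ℤ) : ZMod n) ≠ a := by
          rw [res_sub_one hm]
          intro hcc
          exact h10 (by linear_combination -hcc)
        simp [act_inl, hm, hf, h10]
      · simp [act_inl, hm]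
    | inr u =>
      cases u
      rfl
  · -- commutation among cycle letters
    funext p
    obtain ⟨m, o⟩ := p
    simp only [map_mul, endMul_apply, Fm_of]
    by_cases hma : (m : ZMod n) = a <;> by_cases hmb : (m : ZMod n) = b
    · obtain rfl : a = b := hma.symm.trans hmb
      rfl
    · have hab2 : a ≠ b := fun hcc => hmb (hma.trans hcc)
      have hfz : (a : ZMod n) - 1 ≠ b := fun hcc => hab (by linear_combination hcc)
      simp [act_inl, hma, hmb, hab2, hfz, h10, h20]
    · have hba2 : b ≠ a := fun hcc => hma (hmb.trans hcc)
      have hfz : (b : ZMod n) - 1 ≠ a := fun hcc => hba (by linear_combination hcc)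
      simp [act_inl, hma, hmb, hba2, hfz, h10, h20]
    · simp [act_inl, hma, hmb]
  · -- y commutes with x_a, a ≠ 1
    funext p
    obtain ⟨m, o⟩ := p
    simp only [map_mul, endMul_apply, Fm_of]
    by_cases hm : (m : ZMod n) = a
    · have hq : qf n (m - 1) = qf n m := qf_pred_eq hn (by rw [hm]; exact ha)
      simp [act_inl, act_inr, hm, hq]
    · simp [act_inl, act_inr, hm]
  · -- braid relations along the cycle
    have e1 : (a + 1 : ZMod n) ≠ a := fun hcc => h10 (by linear_combination hcc)
    have e1' : (a : ZMod n) ≠ a + 1 := fun hcc => e1 hcc.symm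
    rcases hw with rfl | rfl <;>
    · funext p
      obtain ⟨m, o⟩ := p
      simp only [map_mul, endMul_apply, Fm_of]
      have e2 : (a : ZMod n) - 1 ≠ a + 1 := fun hcc => h20 (by linear_combination -hcc)
      have e3 : (a : ZMod n) - 1 ≠ a := fun hcc => h10 (by linear_combination -hcc)
      have e4 : (a + 1 : ZMod n) - 1 = a := by ring
      by_cases hma : (m : ZMod n) = a
      · have hnma1 : (m : ZMod n) ≠ a + 1 := by rw [hma]; exact e1'
        simp [act_inl, hma, hnma1, e1, e1', e2, e3, e4, h10, h20]
      · by_cases hma1 : (m : ZMod n) = a + 1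
        · simp [act_inl, hma, hma1, e1, e1', e2, e3, e4, h10, h20]
        · simp [act_inl, hma, hma1]
  · -- braid relations involving y
    rcases hw with rfl | rfl <;>
    · funext p
      obtain ⟨m, o⟩ := p
      simp only [map_mul, endMul_apply, Fm_of]
      by_cases hm : (m : ZMod n) = 1
      · have hf : ((m - 1 : ℤ) : ZMod n) ≠ 1 := by
          rw [res_sub_one hm]
          intro hcc
          exact h10 (by linear_combination -hcc)
        simp [act_inl, act_inr, hm, hf, h10, h01]
      · simp [act_inl, act_inr, hm]

end Aux3

section Aux4
variable {n : ℕ}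

/-- the representation of `HK_Θ`. -/
def Phi (n : ℕ) (hn : 3 ≤ n) : HKT n →* Function.End (ℤ × Option ℤ) :=
  Con.lift _ (Fm n) (Con.conGen_le.2 fun w v h => (Con.ker_rel _).2 (Fm_rel hn w v h))

lemma Phi_prh (hn : 3 ≤ n) (w : FreeMonoid (ZMod n ⊕ Unit)) :
    Phi n hn (prh n w) = Fm n w := Con.lift_mk' _ _

lemma Phi_mk' (hn : 3 ≤ n) (w : FreeMonoid (ZMod n ⊕ Unit)) :
    Phi n hn ((conGen (hkRel n)).mk' w) = Fm n w := Con.lift_mk' _ _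

lemma Fm_ofList (l : List (ZMod n ⊕ Unit)) (p : ℤ × Option ℤ) :
    Fm n (FreeMonoid.ofList l) p = l.foldr (act n) p := by
  induction l with
  | nil => rfl
  | cons g l ih =>
    have h1 : FreeMonoid.ofList (g :: l) = FreeMonoid.of g * FreeMonoid.ofList l := rfl
    rw [h1, map_mul, endMul_apply, ih]
    have h2 : Fm n (FreeMonoid.of g) = act n g := FreeMonoid.lift_eval_of _ _
    rw [h2]
    rfl

lemma Fm_eval (w : FreeMonoid (ZMod n ⊕ Unit)) (p : ℤ × Option ℤ) :
    Fm n w p = (FreeMonoid.toList w).foldr (act n) p := by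
  conv_lhs => rw [← FreeMonoid.ofList_toList w]
  rw [Fm_ofList]

lemma Phi_dxn1 (hn : 3 ≤ n) (p : ℤ × Option ℤ) :
    Phi n hn (dxn1 n) p = (Cf n p.1, p.2) := by
  obtain ⟨m, o⟩ := p
  rw [dxn1, Phi_prh, Fm_ofList]
  exact cword_eval hn m o

lemma Phi_inner (hn : 3 ≤ n) (p : ℤ × Option ℤ) :
    Phi n hn (inner n) p = (Df n p.1, p.2) := by
  obtain ⟨m, o⟩ := p
  rw [inner, Phi_prh, Fm_ofList]
  exact inner_eval hn m o

lemma Phi_yel (hn : 3 ≤ n) (m : ℤ) (o : Option ℤ) :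
    Phi n hn (yel n) (m, o) = (m, some (qf n m)) := by
  rw [yel, Phi_prh]
  have h2 : Fm n (FreeMonoid.of (Sum.inr () : ZMod n ⊕ Unit)) = act n (Sum.inr ()) :=
    FreeMonoid.lift_eval_of _ _
  rw [h2]
  rfl

lemma Phi_pow (hn : 3 ≤ n) (x : HKT n) (F : ℤ → ℤ)
    (hx : ∀ p : ℤ × Option ℤ, Phi n hn x p = (F p.1, p.2)) (k : ℕ) (m : ℤ) (o : Option ℤ) :
    Phi n hn (x ^ k) (m, o) = (F^[k] m, o) := by
  induction k generalizing m with
  | zero =>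
    rw [pow_zero, map_one]
    rfl
  | succ k ih =>
    rw [pow_succ']  -- x^(k+1) = x * x^k
    rw [map_mul, endMul_apply, ih]
    rw [hx ((F^[k] m, o))]
    simp [Function.iterate_succ_apply']

lemma Phi_wk (hn : 3 ≤ n) (k : ℕ) (m : ℤ) (o : Option ℤ) :
    Phi n hn (wk n k) (m, o) = ((Cf n)^[k] m, some (qf n m)) := by
  rw [wk, map_mul, endMul_apply, Phi_yel hn]
  exact Phi_pow hn _ _ (Phi_dxn1 hn) k m _

lemma Phi_xxy (hn : 3 ≤ n) (m : ℤ) (o : Option ℤ) :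
    Phi n hn (prh n (FreeMonoid.of (Sum.inl (1 : ZMod n)) * FreeMonoid.of (Sum.inl (2 : ZMod n)) *
      FreeMonoid.of (Sum.inr ()))) (m, o) = (Xf n m, some (qf n m)) := by
  have h10 : (1 : ZMod n) ≠ 0 := one_ne_zero' hn
  have h20 : (2 : ZMod n) ≠ 0 := two_ne_zero' hn
  rw [Phi_prh, map_mul, map_mul, endMul_apply, endMul_apply]
  have e1 : Fm n (FreeMonoid.of (Sum.inl (1 : ZMod n))) = act n (Sum.inl 1) :=
    FreeMonoid.lift_eval_of _ _
  have e2 : Fm n (FreeMonoid.of (Sum.inl (2 : ZMod n))) = act n (Sum.inl 2) :=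
    FreeMonoid.lift_eval_of _ _
  have e3 : Fm n (FreeMonoid.of (Sum.inr () : ZMod n ⊕ Unit)) = act n (Sum.inr ()) :=
    FreeMonoid.lift_eval_of _ _
  rw [e1, e2, e3, act_y]
  by_cases h2 : (m : ZMod n) = 2
  · have h21 : ((m - 1 : ℤ) : ZMod n) = 1 := by rw [res_sub_one h2]; ring
    rw [act_fire h2, act_fire h21]
    unfold Xf
    rw [if_pos h2]
    have : m - 1 - 1 = m - 2 := by ring
    rw [this]
  · by_cases h1 : (m : ZMod n) = 1
    · rw [act_skip h2, act_fire h1]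
      unfold Xf
      rw [if_neg h2, if_pos h1]
    · rw [act_skip h2, act_skip h1]
      unfold Xf
      rw [if_neg h2, if_neg h1]

lemma Phi_vk (hn : 3 ≤ n) (k : ℕ) (m : ℤ) (o : Option ℤ) :
    Phi n hn (vk n k) (m, o)
      = (Xf n ((Df n)^[k] m), some (qf n ((Df n)^[k] m))) := by
  rw [vk, map_mul, endMul_apply, Phi_pow hn _ _ (Phi_inner hn) k m o, Phi_xxy hn]

/- trajectory facts -/

lemma int2_res (hn : 3 ≤ n) : ((2 : ℤ) : ZMod n) = 2 := by push_cast; rfl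

lemma Df_two (hn : 3 ≤ n) : Df n 2 = 0 := by
  unfold Df
  rw [if_pos (int2_res hn)]
  ring

lemma Df_res_ne_one (hn : 3 ≤ n) {u : ℤ} (hu : (u : ZMod n) ≠ 1) :
    ((Df n u : ℤ) : ZMod n) ≠ 1 := by
  have h10 : (1 : ZMod n) ≠ 0 := one_ne_zero' hn
  have h20 : (2 : ZMod n) ≠ 0 := two_ne_zero' hn
  unfold Df
  by_cases h2 : (u : ZMod n) = 2
  · rw [if_pos h2]
    have : ((u - 2 : ℤ) : ZMod n) = (u : ZMod n) - 2 := by push_cast; ring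
    rw [this, h2]
    intro hcc
    exact h10 (by linear_combination -hcc)
  · rw [if_neg h2, res_sub_one rfl]
    intro hcc
    exact h2 (by linear_combination hcc)

lemma Df_iter_res (hn : 3 ≤ n) (j : ℕ) : (((Df n)^[j] 0 : ℤ) : ZMod n) ≠ 1 := by
  induction j with
  | zero =>
    simp only [Function.iterate_zero, id_eq]
    intro hcc
    exact one_ne_zero' hn (by push_cast at hcc; linear_combination -hcc)
  | succ j ih =>
    rw [Function.iterate_succ_apply']
    exact Df_res_ne_one hn ih

lemma local_ne (hn : 3 ≤ n) {u : ℤ} (hu : (u : ZMod n) ≠ 1) :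
    ¬ (Xf n (Df n u) = Xf n u ∧ qf n (Df n u) = qf n u) := by
  rintro ⟨hX, hq⟩
  by_cases h2 : (u : ZMod n) = 2
  · -- second coordinates differ
    have hD : Df n u = u - 2 := by unfold Df; rw [if_pos h2]
    have hq1 : qf n (u - 1) = qf n u := qf_pred_eq hn (by
      rw [h2]; intro hcc; exact one_ne_zero' hn (by linear_combination hcc))
    have hq2 : qf n (u - 1 - 1) = qf n (u - 1) - 1 := qf_pred_lt hn (by rw [res_sub_one h2]; ring)
    rw [hD] at hq
    have : u - 1 - 1 = u - 2 := by ring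
    rw [this] at hq2
    omega
  · -- first coordinates differ
    have hD : Df n u = u - 1 := by unfold Df; rw [if_neg h2]
    have hXu : Xf n u = u := by unfold Xf; rw [if_neg h2, if_neg hu]
    have hXD : Xf n (Df n u) ≤ u - 1 := by
      rw [hD]; exact (Xf_le _).trans (by omega)
    rw [hXu] at hX
    omega

/-- ascending preimage map. -/
def pre (n : ℕ) (v : ℤ) : ℤ := if (v : ZMod n) = 0 then v + 2 else v + 1

lemma pre_spec (hn : 3 ≤ n) {v : ℤ} (hv : (v : ZMod n) ≠ 1) :
    Df n (pre n v) = v ∧ ((pre n v : ℤ) : ZMod n) ≠ 1 := by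
  have h10 : (1 : ZMod n) ≠ 0 := one_ne_zero' hn
  have h20 : (2 : ZMod n) ≠ 0 := two_ne_zero' hn
  by_cases h0 : (v : ZMod n) = 0
  · have hp : pre n v = v + 2 := by unfold pre; rw [if_pos h0]
    have hres : ((v + 2 : ℤ) : ZMod n) = 2 := by push_cast; rw [h0]; ring
    constructor
    · rw [hp]
      unfold Df
      rw [if_pos hres]
      ring
    · rw [hp, hres]
      intro hcc
      exact h10 (by linear_combination hcc)
  · have hp : pre n v = v + 1 := by unfold pre; rw [if_neg h0]
    have hres : ((v + 1 : ℤ) : ZMod n) = (v : ZMod n) + 1 := by push_cast; ring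
    constructor
    · rw [hp]
      unfold Df
      rw [if_neg (by
        rw [hres]
        intro hcc
        exact hv (by linear_combination hcc))]
      ring
    · rw [hp, hres]
      intro hcc
      exact h0 (by linear_combination hcc)

lemma pre_iter (hn : 3 ≤ n) (i : ℕ) {v : ℤ} (hv : (v : ZMod n) ≠ 1) :
    (Df n)^[i] ((pre n)^[i] v) = v ∧ (((pre n)^[i] v : ℤ) : ZMod n) ≠ 1 := by
  induction i with
  | zero => exact ⟨rfl, hv⟩
  | succ i ih =>
    obtain ⟨hD, hres⟩ := ih
    obtain ⟨hD2, hres2⟩ := pre_spec hn hres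
    constructor
    · rw [Function.iterate_succ_apply' (pre n), Function.iterate_succ_apply (Df n), hD2, hD]
    · rw [Function.iterate_succ_apply' (pre n)]
      exact hres2

end Aux4

section Aux5
variable {n : ℕ}

lemma Xf_zero (hn : 3 ≤ n) : Xf n 0 = 0 := by
  have h10 : (1 : ZMod n) ≠ 0 := one_ne_zero' hn
  have h20 : (2 : ZMod n) ≠ 0 := two_ne_zero' hn
  have hz : ((0 : ℤ) : ZMod n) = 0 := by push_cast; rfl
  unfold Xf
  rw [if_neg (by rw [hz]; exact fun hcc => h20 hcc.symm),
    if_neg (by rw [hz]; exact fun hcc => h10 hcc.symm)]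

lemma Xf_two (hn : 3 ≤ n) : Xf n 2 = 0 := by
  unfold Xf
  rw [if_pos (int2_res hn)]
  norm_num

end Aux5


/-- Lemma 5.1 (nonnoether): `HK_Θ` satisfies neither the ACC on right ideals nor
the ACC on left ideals; explicitly, `w_k ∉ w_i HK_Θ` and `v_k ∉ HK_Θ v_i`
whenever `1 ≤ i < k`. -/
theorem stmt15 (n : ℕ) (hn : 3 ≤ n) :
    (∀ k i : ℕ, 1 ≤ i → i < k → ¬ ∃ t : HKT n, wk n k = wk n i * t) ∧
    (∀ k i : ℕ, 1 ≤ i → i < k → ¬ ∃ t : HKT n, vk n k = t * vk n i) ∧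
    ¬ (∀ f : ℕ → Set (HKT n), (∀ m, ∀ s ∈ f m, ∀ t : HKT n, s * t ∈ f m) →
        (∀ m, f m ⊆ f (m + 1)) → ∃ N, ∀ m, N ≤ m → f m = f N) ∧
    ¬ (∀ f : ℕ → Set (HKT n), (∀ m, ∀ s ∈ f m, ∀ t : HKT n, t * s ∈ f m) →
        (∀ m, f m ⊆ f (m + 1)) → ∃ N, ∀ m, N ≤ m → f m = f N) := by
  have h10 : (1 : ZMod n) ≠ 0 := one_ne_zero' hn
  have h20 : (2 : ZMod n) ≠ 0 := two_ne_zero' hn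
  have part1 : ∀ k i : ℕ, 1 ≤ i → i < k → ¬ ∃ t : HKT n, wk n k = wk n i * t := by
    rintro k i hi hik ⟨t, ht⟩
    obtain ⟨w, rfl⟩ := Con.mk'_surjective (c := conGen (hkRel n)) t
    have happ := congrArg (fun z => Phi n hn z ((1 : ℤ), (none : Option ℤ))) ht
    simp only [map_mul, endMul_apply] at happ
    rw [Phi_wk hn, Phi_mk' hn] at happ
    set P := Fm n w ((1 : ℤ), (none : Option ℤ)) with hP
    rw [show P = (P.1, P.2) from rfl, Phi_wk hn] at happ
    rw [Prod.mk.injEq, Option.some.injEq] at happ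
    obtain ⟨hfst, hsnd⟩ := happ
    have hμle : P.1 ≤ 1 := by
      rw [hP, Fm_eval]
      exact ev_fst_le _ _
    have hq : qf n P.1 = 0 := by rw [← hsnd, qf_one hn]
    have hμ : P.1 = 1 := by
      by_contra hne
      have h0 : P.1 ≤ 0 := by omega
      have := (qf_mono hn h0).trans_eq (qf_zero hn)
      omega
    rw [hμ] at hfst
    have hb : (Cf n)^[k] 1 ≤ (Cf n)^[i] 1 - ((k - i : ℕ) : ℤ) := by
      have hsplit : (Cf n)^[k] (1 : ℤ) = (Cf n)^[k - i] ((Cf n)^[i] 1) := by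
        rw [← Function.iterate_add_apply, Nat.sub_add_cancel (le_of_lt hik)]
      rw [hsplit]
      exact Cf_iter_le _ _
    have hcast : (1 : ℤ) ≤ ((k - i : ℕ) : ℤ) := by
      exact_mod_cast Nat.one_le_iff_ne_zero.2 (by omega)
    omega
  have part2 : ∀ k i : ℕ, 1 ≤ i → i < k → ¬ ∃ t : HKT n, vk n k = t * vk n i := by
    rintro k i hi hik ⟨t, ht⟩
    obtain ⟨w, rfl⟩ := Con.mk'_surjective (c := conGen (hkRel n)) t
    have h01 : ((0 : ℤ) : ZMod n) ≠ 1 := by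
      push_cast
      exact fun hcc => h10 hcc.symm
    have h21 : ((2 : ℤ) : ZMod n) ≠ 1 := by
      rw [int2_res hn]
      intro hcc
      exact h10 (by linear_combination hcc)
    obtain ⟨haD, -⟩ := pre_iter hn i h01
    obtain ⟨hbD, -⟩ := pre_iter hn i h21
    set a := (pre n)^[i] (0 : ℤ) with hadef
    set b := (pre n)^[i] (2 : ℤ) with hbdef
    set j := k - i with hj
    have hj1 : 1 ≤ j := by omega
    have hkji : k = j + i := by omega
    have hDka : (Df n)^[k] a = (Df n)^[j] 0 := by
      rw [hkji, Function.iterate_add_apply, haD]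
    have hDkb : (Df n)^[k] b = (Df n)^[j - 1] 0 := by
      rw [hkji, Function.iterate_add_apply, hbD,
        show j = (j - 1) + 1 by omega, Function.iterate_add_apply]
      simp [Df_two hn]
    have h1 := congrArg (fun z => Phi n hn z (a, (none : Option ℤ))) ht
    have h2 := congrArg (fun z => Phi n hn z (b, (none : Option ℤ))) ht
    simp only [map_mul, endMul_apply] at h1 h2
    rw [Phi_vk hn, Phi_vk hn, Phi_mk' hn, haD, Xf_zero hn, qf_zero hn, hDka] at h1
    rw [Phi_vk hn, Phi_vk hn, Phi_mk' hn, hbD, Xf_two hn, qf_two hn, hDkb] at h2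
    rcases Classical.em ((Sum.inr () : ZMod n ⊕ Unit) ∈ FreeMonoid.toList w) with hy | hy
    · obtain ⟨l₁, l₂, hls⟩ := List.append_of_mem hy
      have key : Fm n w ((0 : ℤ), some (-1 : ℤ)) = Fm n w ((0 : ℤ), some (0 : ℤ)) := by
        simp only [Fm_eval]
        rw [hls, List.foldr_append, List.foldr_append, List.foldr_cons, List.foldr_cons]
        congr 1
        have hfst : ((l₂.foldr (act n) ((0 : ℤ), some (-1 : ℤ)))).1
            = ((l₂.foldr (act n) ((0 : ℤ), some (0 : ℤ)))).1 := ev_fst_congr _ rfl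
        apply Prod.ext
        · simp only [act_inr]
          exact hfst
        · simp only [act_inr, hfst]
      have hcontr := h1.trans (key.trans h2.symm)
      rw [Prod.mk.injEq, Option.some.injEq] at hcontr
      have hres := Df_iter_res hn (j - 1)
      have hDu : Df n ((Df n)^[j - 1] 0) = (Df n)^[j] 0 := by
        conv_rhs => rw [show j = (j - 1) + 1 by omega, Function.iterate_succ_apply' (Df n)]
      exact local_ne hn hres ⟨by rw [hDu]; exact hcontr.1, by rw [hDu]; exact hcontr.2⟩
    · have hsndw : (Fm n w ((0 : ℤ), some (0 : ℤ))).2 = some (0 : ℤ) := by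
        rw [Fm_eval]
        exact ev_snd_noY _ hy _
      have h2' := congrArg Prod.snd h2
      simp only [hsndw] at h2'
      rw [Option.some.injEq] at h2'
      have hle : (Df n)^[j - 1] (0 : ℤ) ≤ 0 := by
        have := Df_iter_le (n := n) (j - 1) 0
        omega
      have := (qf_mono hn hle).trans_eq (qf_zero hn)
      omega
  refine ⟨part1, part2, ?_, ?_⟩
  · intro hACC
    obtain ⟨N, hN⟩ := hACC
      (fun m => {x | ∃ j : ℕ, 1 ≤ j ∧ j ≤ m + 1 ∧ ∃ t : HKT n, x = wk n j * t})
      (by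
        rintro m x ⟨j, hj1, hj2, t, rfl⟩ s
        exact ⟨j, hj1, hj2, t * s, mul_assoc _ _ _⟩)
      (by
        rintro m x ⟨j, hj1, hj2, t, rfl⟩
        exact ⟨j, hj1, by omega, t, rfl⟩)
    have hmem : wk n (N + 2) ∈
        {x | ∃ j : ℕ, 1 ≤ j ∧ j ≤ (N + 1) + 1 ∧ ∃ t : HKT n, x = wk n j * t} :=
      ⟨N + 2, by omega, by omega, 1, (mul_one _).symm⟩
    rw [hN (N + 1) (by omega)] at hmem
    obtain ⟨j, hj1, hj2, t, ht⟩ := hmem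
    exact part1 (N + 2) j hj1 (by omega) ⟨t, ht⟩
  · intro hACC
    obtain ⟨N, hN⟩ := hACC
      (fun m => {x | ∃ j : ℕ, 1 ≤ j ∧ j ≤ m + 1 ∧ ∃ t : HKT n, x = t * vk n j})
      (by
        rintro m x ⟨j, hj1, hj2, t, rfl⟩ s
        exact ⟨j, hj1, hj2, s * t, (mul_assoc _ _ _).symm⟩)
      (by
        rintro m x ⟨j, hj1, hj2, t, rfl⟩
        exact ⟨j, hj1, by omega, t, rfl⟩)
    have hmem : vk n (N + 2) ∈
        {x | ∃ j : ℕ, 1 ≤ j ∧ j ≤ (N + 1) + 1 ∧ ∃ t : HKT n, x = t * vk n j} :=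
      ⟨N + 2, by omega, by omega, 1, (one_mul _).symm⟩
    rw [hN (N + 1) (by omega)] at hmem
    obtain ⟨j, hj1, hj2, t, ht⟩ := hmem
    exact part2 (N + 2) j hj1 (by omega) ⟨t, ht⟩

end HK
end
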